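/- arXiv:1009.0700 — 2 statements merged into one kernel-verified Lean document; each statement's English description precedes it below -/
import Mathlib

section
/- Let Φ(f)(t) = f(T(f)+t) − f(T(f)) with T as above. Then Φ : C_0^d[0,∞) → C_0^d[0,1] is continuous at every f with T(f) = 0. -/
open scoped NNReal ENNReal

noncomputable section

/-- `T(f) = inf { t ≥ 0 : f(t) ∈ A and f(u) ∉ A for all t < u ≤ t+1 }`, `inf ∅ = ∞`. -/
def hittingTime (d : ℕ) (A : Submodule ℝ (EuclideanSpace ℝ (Fin d)))
    (f : ℝ≥0 → EuclideanSpace ℝ (Fin d)) : ℝ≥0∞ :=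
  sInf {x : ℝ≥0∞ | ∃ t : ℝ≥0, x = (t : ℝ≥0∞) ∧
    f t ∈ (A : Set (EuclideanSpace ℝ (Fin d))) ∧
    ∀ u : ℝ≥0, t < u → u ≤ t + 1 → f u ∉ (A : Set (EuclideanSpace ℝ (Fin d)))}

/-- `Φ : C_0^d[0,∞) → C_0^d[0,1]`, `(Φ(f))(t) = f(T(f)+t) − f(T(f))`
(on `{T = ∞}` this uses the convention `∞.toNNReal = 0`). -/
def PhiMap (d : ℕ) (A : Submodule ℝ (EuclideanSpace ℝ (Fin d)))
    (f : C(ℝ≥0, EuclideanSpace ℝ (Fin d))) :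
    C(↥(Set.Icc (0 : ℝ≥0) 1), EuclideanSpace ℝ (Fin d)) :=
  ⟨fun t => f ((hittingTime d A (fun s => f s)).toNNReal + t)
      - f ((hittingTime d A (fun s => f s)).toNNReal),
    ((f.continuous.comp (continuous_const.add continuous_subtype_val)).sub
      continuous_const)⟩

/-!
`Φ g` is the increment of `g` over `[T g, T g + 1]`, which depends continuously on the pair
`(T g, g)`; so it suffices that `T` is continuous at `f` within `{g | g 0 = 0}`. As `T f = 0`,
`f` avoids the closed set `A` on `(0, 1]`, hence on `[ε, 1 + ε]` for all small `ε > 0`, and so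
does every `g` close enough to `f` in the compact-open topology. If moreover `g 0 ∈ A`, the last
visit of `g` to `A` before `ε` is followed by a unit time interval outside `A`, so `T g ≤ ε`.
-/

open Set Filter Topology

section Increment

variable {E : Type*} [TopologicalSpace E] [Sub E] [ContinuousSub E]

def incrementAfter (s : ℝ≥0) (g : C(ℝ≥0, E)) : C(Icc (0 : ℝ≥0) 1, E) :=
  ⟨fun t => g (s + t) - g s, by fun_prop⟩

theorem continuous_incrementAfter :
    Continuous fun p : ℝ≥0 × C(ℝ≥0, E) => incrementAfter p.1 p.2 :=
  ContinuousMap.continuous_of_continuous_uncurry _ <| by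
    show Continuous fun q : (ℝ≥0 × C(ℝ≥0, E)) × Icc (0 : ℝ≥0) 1 =>
      q.1.2 (q.1.1 + q.2) - q.1.2 q.1.1
    fun_prop

end Increment

theorem eventually_Icc_subset_of_Ioc_subset {O : Set ℝ≥0} (hO : IsOpen O) (h : Ioc 0 1 ⊆ O) :
    ∀ᶠ ε in 𝓝[>] (0 : ℝ≥0), Icc ε (1 + ε) ⊆ O := by
  obtain ⟨u, hu1, huO⟩ :=
    exists_Ico_subset_of_mem_nhds (hO.mem_nhds (h ⟨one_pos, le_rfl⟩)) ⟨2, one_lt_two⟩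
  filter_upwards [Ioo_mem_nhdsGT (tsub_pos_of_lt hu1)] with ε ⟨hε0, hεu⟩ x ⟨hεx, hx⟩
  rcases le_total x 1 with hx1 | hx1
  · exact h ⟨hε0.trans_le hεx, hx1⟩
  · exact huO ⟨hx1, hx.trans_lt (lt_tsub_iff_left.1 hεu)⟩

section HittingTime

variable {d : ℕ} {A : Submodule ℝ (EuclideanSpace ℝ (Fin d))}
  {f : ℝ≥0 → EuclideanSpace ℝ (Fin d)}

theorem coe_le_hittingTime_of_mem {u : ℝ≥0} (hu : u ≤ 1) (hfu : f u ∈ A) :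
    (u : ℝ≥0∞) ≤ hittingTime d A f := by
  refine le_sInf ?_
  rintro _ ⟨t, rfl, -, hgap⟩
  exact ENNReal.coe_le_coe.2 (not_lt.1 fun htu => hgap u htu (hu.trans le_add_self) hfu)

theorem notMem_of_hittingTime_eq_zero (hT : hittingTime d A f = 0) {u : ℝ≥0} (hu0 : 0 < u)
    (hu1 : u ≤ 1) : f u ∉ A := fun hfu =>
  hu0.ne' (by simpa [hT] using coe_le_hittingTime_of_mem hu1 hfu)

theorem hittingTime_le_of_mem_of_mapsTo (hf : Continuous f) {s ε : ℝ≥0} (hs : s ≤ ε)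
    (hfs : f s ∈ A) (hgap : MapsTo f (Ioc ε (1 + ε)) (A : Set _)ᶜ) :
    hittingTime d A f ≤ ε := by
  set H : Set ℝ≥0 := Iic ε ∩ f ⁻¹' A
  have hH : IsCompact H := (isCompact_Icc (a := 0) (b := ε)).of_isClosed_subset
    (isClosed_Iic.inter (A.closed_of_finiteDimensional.preimage hf))
    fun t ht => ⟨zero_le, ht.1⟩
  obtain ⟨hτε, hτA⟩ := hH.sSup_mem ⟨s, hs, hfs⟩
  refine sInf_le_of_le ⟨sSup H, rfl, hτA, fun u hτu hu hfu => ?_⟩ (ENNReal.coe_le_coe.2 hτε)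
  rcases le_or_gt u ε with huε | hεu
  · exact hτu.not_ge (le_csSup hH.bddAbove ⟨huε, hfu⟩)
  · exact hgap ⟨hεu, hu.trans (by rw [add_comm]; gcongr; exact hτε)⟩ hfu

end HittingTime

theorem continuousWithinAt_hittingTime_of_eq_zero {d : ℕ}
    {A : Submodule ℝ (EuclideanSpace ℝ (Fin d))} {f : C(ℝ≥0, EuclideanSpace ℝ (Fin d))}
    (hT : hittingTime d A f = 0) :
    ContinuousWithinAt (fun g : C(ℝ≥0, EuclideanSpace ℝ (Fin d)) => hittingTime d A g)
      {g | g 0 = 0} f := by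
  have hO : IsOpen (f ⁻¹' (A : Set _)ᶜ) :=
    A.closed_of_finiteDimensional.isOpen_compl.preimage f.continuous
  have hsmall := eventually_Icc_subset_of_Ioc_subset hO
    fun u hu => notMem_of_hittingTime_eq_zero hT hu.1 hu.2
  show Tendsto _ _ (𝓝 (hittingTime d A f))
  rw [hT, ENNReal.tendsto_nhds_zero]
  intro ε hε
  have hlt : ∀ᶠ η : ℝ≥0 in 𝓝[>] 0, (η : ℝ≥0∞) < ε :=
    nhdsWithin_le_nhds ((ENNReal.continuous_coe.tendsto 0).eventually (gt_mem_nhds hε))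
  obtain ⟨η, hηO, hηε⟩ := (hsmall.and hlt).exists
  have hnear : {g : C(ℝ≥0, _) | MapsTo g (Icc η (1 + η)) (A : Set _)ᶜ} ∈ 𝓝 f :=
    (ContinuousMap.isOpen_setOfPred_mapsTo isCompact_Icc
      A.closed_of_finiteDimensional.isOpen_compl).mem_nhds hηO
  filter_upwards [mem_nhdsWithin_of_mem_nhds hnear, self_mem_nhdsWithin] with g hg hg0
  have hg0A : g 0 ∈ A := hg0 ▸ A.zero_mem
  exact (hittingTime_le_of_mem_of_mapsTo g.continuous (zero_le (a := η)) hg0A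
    (hg.mono_left Ioc_subset_Icc_self)).trans hηε.le

theorem continuousWithinAt_PhiMap_general (d : ℕ)
    (A : Submodule ℝ (EuclideanSpace ℝ (Fin d)))
    (f : C(ℝ≥0, EuclideanSpace ℝ (Fin d)))
    (hT : hittingTime d A (fun t => f t) = 0) :
    ContinuousWithinAt (PhiMap d A)
      {g : C(ℝ≥0, EuclideanSpace ℝ (Fin d)) | g 0 = 0} f := by
  have hTime : ContinuousWithinAt (fun g : C(ℝ≥0, EuclideanSpace ℝ (Fin d)) =>
      (hittingTime d A g).toNNReal) {g | g 0 = 0} f :=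
    ContinuousAt.comp_continuousWithinAt (ENNReal.tendsto_toNNReal (by simp [hT]))
      (continuousWithinAt_hittingTime_of_eq_zero hT)
  show ContinuousWithinAt
    (fun g : C(ℝ≥0, _) => incrementAfter (hittingTime d A g).toNNReal g) _ f
  exact continuous_incrementAfter.continuousAt.comp_continuousWithinAt
    (hTime.prodMk continuousWithinAt_id)

/-- `Φ` is continuous (as a map on `C_0^d[0,∞)`) at every `f` with `T(f) = 0`. -/
theorem continuousWithinAt_PhiMap (d : ℕ)
    (A : Submodule ℝ (EuclideanSpace ℝ (Fin d)))
    (f : C(ℝ≥0, EuclideanSpace ℝ (Fin d))) (h0 : f 0 = 0)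
    (hT : hittingTime d A (fun t => f t) = 0) :
    ContinuousWithinAt (PhiMap d A)
      {g : C(ℝ≥0, EuclideanSpace ℝ (Fin d)) | g 0 = 0} f :=
  continuousWithinAt_PhiMap_general d A f hT
end
end

section
/- Let (X_k) be i.i.d. ℤ^d-valued random variables, S_k the partial sums, A a linear subspace of ℝ^d, and T_n = inf { k : S_k ∈ A, S^{int}_{k+t} ∉ A for t ∈ (0,n] } with P(T_n < ∞) = 1. Then the process (S_{T_n+k} − S_{T_n})_{k=1,…,n} is independent of S_{T_n}. -/
open scoped NNReal ENNReal
open MeasureTheory ProbabilityTheory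

noncomputable section

/-- Partial sums `S_k = X_1 + ⋯ + X_k` (here `X` is indexed from `0`). -/
def walk {Ω : Type*} (d : ℕ) (X : ℕ → Ω → EuclideanSpace ℝ (Fin d)) (k : ℕ)
    (ω : Ω) : EuclideanSpace ℝ (Fin d) :=
  ∑ i ∈ Finset.range k, X i ω

/-- Linearly interpolated trajectory `S^{int}_t`. -/
def walkInt {Ω : Type*} (d : ℕ) (X : ℕ → Ω → EuclideanSpace ℝ (Fin d)) (t : ℝ)
    (ω : Ω) : EuclideanSpace ℝ (Fin d) :=
  walk d X ⌊t⌋₊ ω + (t - ⌊t⌋₊) • X ⌊t⌋₊ ω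

/-- `T_n(ω)`'s defining set: `{k : S_k ∈ A, S^{int}_{k+t} ∉ A for t ∈ (0,n]}`. -/
def TnSet {Ω : Type*} (d n : ℕ) (A : Submodule ℝ (EuclideanSpace ℝ (Fin d)))
    (X : ℕ → Ω → EuclideanSpace ℝ (Fin d)) (ω : Ω) : Set ℕ :=
  {k : ℕ | walk d X k ω ∈ (A : Set (EuclideanSpace ℝ (Fin d))) ∧
    ∀ t : ℝ, (k : ℝ) < t → t ≤ (k : ℝ) + n →
      walkInt d X t ω ∉ (A : Set (EuclideanSpace ℝ (Fin d)))}

/-!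
On `{T_n = k}` the defining conditions split at time `k`: the past condition (`S_k ∈ A`, and no
`j` with `j + n < k` qualifies) only involves `X_0, …, X_{k-1}`, and the future condition (the
walk restarted at `S_k` avoids `A` on `(0, n]`) only involves `X_k, X_{k+1}, …`. Times
`j ∈ [k - n, k)` never qualify once `S_k ∈ A`, since the walk started at `S_j` is back in `A` at
time `k`. Independence of past and future and stationarity of the i.i.d. sequence then write
`P(S_{T_n+·} - S_{T_n} ∈ s, S_{T_n} ∈ t)` as `P(escape, S_· ∈ s) · ∑ₖ P(past at k, S_k ∈ t)`,
a function of `s` times a function of `t`, which forces independence.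
-/

open Set

section Independence

variable {Ω β γ : Type*} {mΩ : MeasurableSpace Ω} {mβ : MeasurableSpace β}
  {mγ : MeasurableSpace γ} {μ : Measure Ω}

theorem indepFun_of_measure_inter_preimage_eq_mul_of_factor [IsProbabilityMeasure μ]
    {Y : Ω → β} {Z : Ω → γ} (f : Set β → ℝ≥0∞) (g : Set γ → ℝ≥0∞)
    (h : ∀ s t, MeasurableSet s → MeasurableSet t → μ (Y ⁻¹' s ∩ Z ⁻¹' t) = f s * g t) :
    IndepFun Y Z μ := by
  rw [indepFun_iff_measure_inter_preimage_eq_mul]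
  intro s t hs ht
  have hY := h s univ hs .univ
  have hZ := h univ t .univ ht
  have h1 := h univ univ .univ .univ
  simp only [preimage_univ, inter_univ, univ_inter, measure_univ] at hY hZ h1
  calc μ (Y ⁻¹' s ∩ Z ⁻¹' t) = f s * g t * (f univ * g univ) := by rw [h s t hs ht, ← h1, mul_one]
    _ = μ (Y ⁻¹' s) * μ (Z ⁻¹' t) := by rw [hY, hZ]; ring

theorem identDistrib_shift {X : ℕ → Ω → β} (hindep : iIndepFun X μ)
    (hident : ∀ k, IdentDistrib (X k) (X 0) μ μ) (k : ℕ) :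
    IdentDistrib (fun ω i ↦ X (k + i) ω) (fun ω i ↦ X i ω) μ μ :=
  .pi (fun i ↦ (hident (k + i)).trans (hident i).symm)
    (hindep.precomp (add_right_injective k)) hindep

theorem indep_iSup_comap_lt_comap_shift {X : ℕ → Ω → β} (hXmeas : ∀ k, Measurable (X k))
    (hindep : iIndepFun X μ) (k : ℕ) :
    Indep (⨆ i < k, mβ.comap (X i))
      (MeasurableSpace.comap (fun ω i ↦ X (k + i) ω) MeasurableSpace.pi) μ := by
  refine indep_of_indep_of_le_right (indep_iSup_of_disjoint (fun i ↦ (hXmeas i).comap_le)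
    hindep.iIndep (S := Iio k) (T := Ici k) (Iio_disjoint_Ici le_rfl)) ?_
  rw [MeasurableSpace.pi, MeasurableSpace.comap_iSup]
  refine iSup_le fun i ↦ ?_
  rw [MeasurableSpace.comap_comp]
  exact le_iSup₂ (f := fun j (_ : j ∈ Ici k) ↦ mβ.comap (X j)) (k + i) (Nat.le_add_right k i)

end Independence

section Segment

variable {E : Type*} [AddCommGroup E] [Module ℝ E]

def Hits (C : Set E) (a v : E) : Prop := ∃ t ∈ Ioc (0 : ℝ) 1, a + t • v ∈ C

theorem hits_sub_iff {A : Submodule ℝ E} {a c v : E} (hc : c ∈ A) :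
    Hits A (a - c) v ↔ Hits A a v := by
  simp only [Hits, SetLike.mem_coe, sub_add_eq_add_sub, A.sub_mem_iff_left hc]

variable [TopologicalSpace E] [ContinuousAdd E] [ContinuousSMul ℝ E]

theorem isClosed_setOf_exists_add_smul_mem {C : Set E} (hC : IsClosed C) {K : Set ℝ}
    (hK : IsCompact K) : IsClosed {p : E × E | ∃ t ∈ K, p.1 + t • p.2 ∈ C} := by
  have : CompactSpace K := isCompact_iff_compactSpace.mp hK
  have hclosed : IsClosed {q : (E × E) × K | q.1.1 + (q.2 : ℝ) • q.1.2 ∈ C} :=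
    hC.preimage (by fun_prop)
  convert isClosedMap_fst_of_compactSpace _ hclosed using 1
  ext p
  simp

theorem measurableSet_setOf_hits [MeasurableSpace E] [BorelSpace E] [SecondCountableTopology E]
    {C : Set E} (hC : IsClosed C) : MeasurableSet {p : E × E | Hits C p.1 p.2} := by
  have hunion : {p : E × E | Hits C p.1 p.2} =
      ⋃ m : ℕ, {p : E × E | ∃ t ∈ Icc (1 / (m + 1 : ℝ)) 1, p.1 + t • p.2 ∈ C} := by
    ext p
    simp only [Hits, mem_ofPred_eq, mem_iUnion]
    constructor
    · rintro ⟨t, ⟨ht0, ht1⟩, hp⟩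
      obtain ⟨m, hm⟩ := exists_nat_one_div_lt ht0
      exact ⟨m, t, ⟨hm.le, ht1⟩, hp⟩
    · rintro ⟨m, t, ⟨ht0, ht1⟩, hp⟩
      exact ⟨t, ⟨lt_of_lt_of_le (by positivity) ht0, ht1⟩, hp⟩
  rw [hunion]
  exact .iUnion fun m ↦ (isClosed_setOf_exists_add_smul_mem hC isCompact_Icc).measurableSet

end Segment

section Walk

variable {Ω : Type*} {d n : ℕ} {X : ℕ → Ω → EuclideanSpace ℝ (Fin d)} {ω : Ω}

@[simp]
theorem walk_zero : walk d X 0 ω = 0 := by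
  simp [walk]

theorem walk_succ (k : ℕ) : walk d X (k + 1) ω = walk d X k ω + X k ω := by
  simp [walk, Finset.sum_range_succ]

theorem walk_add_sub_walk (k j : ℕ) :
    walk d X (k + j) ω - walk d X k ω = walk d (fun i ↦ X (k + i)) j ω := by
  simp [walk, Finset.sum_range_add]

theorem walkInt_natCast_add (m : ℕ) {s : ℝ} (hs0 : 0 ≤ s) (hs1 : s ≤ 1) :
    walkInt d X (m + s) ω = walk d X m ω + s • X m ω := by
  rcases hs1.lt_or_eq with hs1 | rfl
  · have hfloor : ⌊(m : ℝ) + s⌋₊ = m := by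
      rw [Nat.floor_eq_iff (by positivity)]
      constructor <;> linarith
    simp [walkInt, hfloor]
  · have hfloor : ⌊(m : ℝ) + 1⌋₊ = m + 1 := by exact_mod_cast Nat.floor_natCast (m + 1)
    simp [walkInt, hfloor, walk_succ]

theorem forall_walkInt_notMem_iff (C : Set (EuclideanSpace ℝ (Fin d))) (k : ℕ) :
    (∀ t : ℝ, (k : ℝ) < t → t ≤ k + n → walkInt d X t ω ∉ C) ↔
      ∀ i < n, ¬ Hits C (walk d X (k + i) ω) (X (k + i) ω) := by
  constructor
  · rintro h i hi ⟨s, ⟨hs0, hs1⟩, hC⟩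
    have hin : (i : ℝ) + 1 ≤ n := by exact_mod_cast hi
    refine h ((k + i : ℕ) + s) (by push_cast; linarith [(i.cast_nonneg : (0 : ℝ) ≤ i)])
      (by push_cast; linarith) ?_
    rwa [walkInt_natCast_add _ hs0.le hs1]
  · rintro h t hkt htn hC
    -- `t` lies on the segment from `S_m` to `S_{m+1}` with `m = ⌈t⌉₊ - 1`
    have hceil : k < ⌈t⌉₊ := Nat.lt_ceil.2 hkt
    have hceil' : ⌈t⌉₊ ≤ k + n := Nat.ceil_le.2 (by exact_mod_cast htn)
    obtain ⟨i, hi⟩ : ∃ i, ⌈t⌉₊ = k + i + 1 := ⟨⌈t⌉₊ - k - 1, by omega⟩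
    have hlt : ((k + i : ℕ) : ℝ) < t := by
      have := Nat.ceil_lt_add_one (hkt.trans_le' k.cast_nonneg).le
      rw [hi] at this; push_cast at this ⊢; linarith
    have hle : t ≤ ((k + i : ℕ) : ℝ) + 1 := by
      have := Nat.le_ceil t; rw [hi] at this; push_cast at this ⊢; linarith
    refine h i (by omega) ⟨t - (k + i : ℕ), ⟨by linarith, by linarith⟩, ?_⟩
    rwa [← walkInt_natCast_add _ (by linarith) (by linarith), add_sub_cancel]

theorem mem_TnSet_iff {A : Submodule ℝ (EuclideanSpace ℝ (Fin d))} {k : ℕ} :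
    k ∈ TnSet d n A X ω ↔
      walk d X k ω ∈ A ∧ ∀ i < n, ¬ Hits A (walk d X (k + i) ω) (X (k + i) ω) := by
  rw [TnSet, mem_ofPred_eq, forall_walkInt_notMem_iff, SetLike.mem_coe]

end Walk

section FirstTime

variable {Ω : Type*} {d n : ℕ} {A : Submodule ℝ (EuclideanSpace ℝ (Fin d))}
  {X : ℕ → Ω → EuclideanSpace ℝ (Fin d)} {ω : Ω}

theorem zero_mem_TnSet_shift_iff {k : ℕ} (hk : walk d X k ω ∈ A) :
    0 ∈ TnSet d n A (fun i ↦ X (k + i)) ω ↔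
      ∀ i < n, ¬ Hits A (walk d X (k + i) ω) (X (k + i) ω) := by
  simp only [mem_TnSet_iff, walk_zero, zero_add, A.zero_mem, true_and, ← walk_add_sub_walk,
    hits_sub_iff hk]

theorem notMem_TnSet_of_lt_of_le {j k : ℕ} (hjk : j < k) (hkj : k ≤ j + n)
    (hk : walk d X k ω ∈ A) : j ∉ TnSet d n A X ω := by
  intro hj
  refine (mem_TnSet_iff.1 hj).2 (k - 1 - j) (by omega) ⟨1, ⟨one_pos, le_rfl⟩, ?_⟩
  rwa [one_smul, ← walk_succ, show j + (k - 1 - j) + 1 = k by omega]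

theorem isLeast_TnSet_iff {k : ℕ} :
    IsLeast (TnSet d n A X ω) k ↔
      (walk d X k ω ∈ A ∧ ∀ j, j + n < k → j ∉ TnSet d n A X ω) ∧
        0 ∈ TnSet d n A (fun i ↦ X (k + i)) ω := by
  constructor
  · rintro ⟨hk, hleast⟩
    obtain ⟨hkA, havoid⟩ := mem_TnSet_iff.1 hk
    exact ⟨⟨hkA, fun j hj hjT ↦ by have := hleast hjT; omega⟩,
      (zero_mem_TnSet_shift_iff hkA).2 havoid⟩
  · rintro ⟨⟨hkA, hpast⟩, hfuture⟩
    refine ⟨mem_TnSet_iff.2 ⟨hkA, (zero_mem_TnSet_shift_iff hkA).1 hfuture⟩, fun j hj ↦ ?_⟩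
    by_contra! hjk
    by_cases hjn : j + n < k
    · exact hpast j hjn hj
    · exact notMem_TnSet_of_lt_of_le hjk (by omega) hkA hj

end FirstTime

section Events

variable {Ω : Type*} {d : ℕ} (A : Submodule ℝ (EuclideanSpace ℝ (Fin d)))
  (X : ℕ → Ω → EuclideanSpace ℝ (Fin d))

def pastEvent (n k : ℕ) (t : Set (EuclideanSpace ℝ (Fin d))) : Set Ω :=
  {ω | walk d X k ω ∈ (A : Set _) ∩ t ∧ ∀ j, j + n < k → j ∉ TnSet d n A X ω}

def futureEvent {n : ℕ} (s : Set (Fin n → EuclideanSpace ℝ (Fin d))) : Set Ω :=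
  {ω | 0 ∈ TnSet d n A X ω ∧ (fun i : Fin n ↦ walk d X (i + 1) ω) ∈ s}

variable {A X} {n : ℕ} {m : MeasurableSpace Ω}

theorem measurable_walk {j : ℕ} (hX : ∀ i < j, Measurable (X i)) : Measurable (walk d X j) :=
  Finset.measurable_sum _ fun i hi ↦ hX i (Finset.mem_range.1 hi)

theorem measurableSet_mem_TnSet {k : ℕ} (hX : ∀ i < k + n, Measurable (X i)) :
    MeasurableSet {ω | k ∈ TnSet d n A X ω} := by
  have hA : MeasurableSet (A : Set (EuclideanSpace ℝ (Fin d))) :=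
    A.closed_of_finiteDimensional.measurableSet
  simp_rw [mem_TnSet_iff, ofPred_and, ofPred_forall]
  refine ((measurable_walk fun i hi ↦ hX i (by omega)) hA).inter
    (.iInter fun i ↦ .iInter fun hi ↦ (MeasurableSet.compl ?_))
  exact ((measurable_walk fun j hj ↦ hX j (by omega)).prodMk (hX (k + i) (by omega)))
    (measurableSet_setOf_hits A.closed_of_finiteDimensional)

theorem measurableSet_pastEvent {k : ℕ} (hX : ∀ i < k, Measurable (X i))
    {t : Set (EuclideanSpace ℝ (Fin d))} (ht : MeasurableSet t) :
    MeasurableSet (pastEvent A X n k t) := by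
  simp_rw [pastEvent, ofPred_and, ofPred_forall]
  exact (measurable_walk hX (A.closed_of_finiteDimensional.measurableSet.inter ht)).inter
    (.iInter fun j ↦ .iInter fun hj ↦ (measurableSet_mem_TnSet fun i hi ↦ hX i (by omega)).compl)

theorem measurableSet_futureEvent (hX : ∀ i, Measurable (X i))
    {s : Set (Fin n → EuclideanSpace ℝ (Fin d))} (hs : MeasurableSet s) :
    MeasurableSet (futureEvent A X s) :=
  (measurableSet_mem_TnSet fun i _ ↦ hX i).inter
    (measurable_pi_lambda _ (fun _ ↦ measurable_walk fun j _ ↦ hX j) hs)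

end Events

section Decomposition

variable {Ω : Type*} {d n : ℕ} {A : Submodule ℝ (EuclideanSpace ℝ (Fin d))}
  {X : ℕ → Ω → EuclideanSpace ℝ (Fin d)}

theorem isLeast_TnSet_of_mem_inter {k : ℕ} {ω : Ω} {t : Set (EuclideanSpace ℝ (Fin d))}
    {s : Set (Fin n → EuclideanSpace ℝ (Fin d))}
    (h : ω ∈ pastEvent A X n k t ∩ futureEvent A (fun i ↦ X (k + i)) s) :
    IsLeast (TnSet d n A X ω) k :=
  isLeast_TnSet_iff.2 ⟨⟨h.1.1.1, h.1.2⟩, h.2.1⟩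

theorem increments_eq_walk_shift (k : ℕ) (ω : Ω) :
    (fun i : Fin n ↦ walk d X (k + i + 1) ω - walk d X k ω) =
      fun i : Fin n ↦ walk d (fun j ↦ X (k + j)) (i + 1) ω :=
  funext fun i ↦ walk_add_sub_walk k (i + 1)

theorem inter_preimage_eq_iUnion (s : Set (Fin n → EuclideanSpace ℝ (Fin d)))
    (t : Set (EuclideanSpace ℝ (Fin d))) :
    {ω | (TnSet d n A X ω).Nonempty} ∩
      ((fun ω (i : Fin n) ↦ walk d X (sInf (TnSet d n A X ω) + i + 1) ω
          - walk d X (sInf (TnSet d n A X ω)) ω) ⁻¹' s ∩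
        (fun ω ↦ walk d X (sInf (TnSet d n A X ω)) ω) ⁻¹' t) =
      ⋃ k, pastEvent A X n k t ∩ futureEvent A (fun i ↦ X (k + i)) s := by
  ext ω
  simp only [mem_inter_iff, mem_iUnion, mem_preimage, mem_ofPred_eq, increments_eq_walk_shift]
  constructor
  · rintro ⟨hne, hs, ht⟩
    have hleast : IsLeast (TnSet d n A X ω) (sInf (TnSet d n A X ω)) :=
      ⟨Nat.sInf_mem hne, fun j hj ↦ Nat.sInf_le hj⟩
    obtain ⟨⟨hA, hpast⟩, hfuture⟩ := isLeast_TnSet_iff.1 hleast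
    exact ⟨_, ⟨⟨hA, ht⟩, hpast⟩, hfuture, hs⟩
  · rintro ⟨k, hk⟩
    have hleast := isLeast_TnSet_of_mem_inter hk
    rw [hleast.csInf_eq]
    exact ⟨⟨k, hleast.1⟩, hk.2.2, hk.1.1.2⟩

variable [MeasurableSpace Ω] {μ : Measure Ω}

theorem measure_pastEvent_inter_futureEvent_shift (hXmeas : ∀ k, Measurable (X k))
    (hindep : iIndepFun X μ) (hident : ∀ k, IdentDistrib (X k) (X 0) μ μ) (k : ℕ)
    {t : Set (EuclideanSpace ℝ (Fin d))} (ht : MeasurableSet t)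
    {s : Set (Fin n → EuclideanSpace ℝ (Fin d))} (hs : MeasurableSet s) :
    μ (pastEvent A X n k t ∩ futureEvent A (fun i ↦ X (k + i)) s) =
      μ (pastEvent A X n k t) * μ (futureEvent A X s) := by
  set B := futureEvent A (fun i (x : ℕ → EuclideanSpace ℝ (Fin d)) ↦ x i) s
  have hB : MeasurableSet B := measurableSet_futureEvent measurable_pi_apply hs
  have hshift : futureEvent A (fun i ↦ X (k + i)) s = (fun ω i ↦ X (k + i) ω) ⁻¹' B := rfl
  have hunshift : futureEvent A X s = (fun ω i ↦ X i ω) ⁻¹' B := rfl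
  have hpast : MeasurableSet[⨆ i < k, _] (pastEvent A X n k t) :=
    measurableSet_pastEvent (fun i hi ↦ measurable_iff_comap_le.2 <|
      le_iSup₂ (f := fun j (_ : j < k) ↦ MeasurableSpace.comap (X j) _) i hi) ht
  rw [hshift, hunshift, (Indep_iff _ _ μ).1 (indep_iSup_comap_lt_comap_shift hXmeas hindep k) _ _
    hpast ⟨B, hB, rfl⟩, (identDistrib_shift hindep hident k).measure_mem_eq hB]

theorem measure_inter_preimage_eq_mul_tsum (hXmeas : ∀ k, Measurable (X k))
    (hindep : iIndepFun X μ) (hident : ∀ k, IdentDistrib (X k) (X 0) μ μ)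
    (hfin : ∀ᵐ ω ∂μ, (TnSet d n A X ω).Nonempty)
    {s : Set (Fin n → EuclideanSpace ℝ (Fin d))} (hs : MeasurableSet s)
    {t : Set (EuclideanSpace ℝ (Fin d))} (ht : MeasurableSet t) :
    μ ((fun ω (i : Fin n) ↦ walk d X (sInf (TnSet d n A X ω) + i + 1) ω
          - walk d X (sInf (TnSet d n A X ω)) ω) ⁻¹' s ∩
        (fun ω ↦ walk d X (sInf (TnSet d n A X ω)) ω) ⁻¹' t) =
      μ (futureEvent A X s) * ∑' k, μ (pastEvent A X n k t) := by
  have hdisj : Pairwise (Function.onFun Disjoint fun k ↦ pastEvent A X n k t ∩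
      futureEvent A (fun i ↦ X (k + i)) s) := fun k l hkl ↦
    disjoint_left.2 fun ω hk hl ↦
      hkl ((isLeast_TnSet_of_mem_inter hk).unique (isLeast_TnSet_of_mem_inter hl))
  have hmeas (k : ℕ) : MeasurableSet (pastEvent A X n k t ∩ futureEvent A (fun i ↦ X (k + i)) s) :=
    (measurableSet_pastEvent (fun i _ ↦ hXmeas i) ht).inter
      (measurableSet_futureEvent (fun i ↦ hXmeas (k + i)) hs)
  rw [← measure_inter_conull hfin, inter_comm, inter_preimage_eq_iUnion, measure_iUnion hdisj hmeas,
    ← ENNReal.tsum_mul_left]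
  exact tsum_congr fun k ↦ by
    rw [measure_pastEvent_inter_futureEvent_shift hXmeas hindep hident k ht hs, mul_comm]

end Decomposition

theorem post_Tn_increments_indep_general {Ω : Type*} [MeasurableSpace Ω] (μ : Measure Ω)
    [IsProbabilityMeasure μ] (d n : ℕ)
    (A : Submodule ℝ (EuclideanSpace ℝ (Fin d)))
    (X : ℕ → Ω → EuclideanSpace ℝ (Fin d))
    (hXmeas : ∀ k, Measurable (X k))
    (hindep : iIndepFun X μ)
    (hident : ∀ k, IdentDistrib (X k) (X 0) μ μ)
    (hfin : ∀ᵐ ω ∂μ, (TnSet d n A X ω).Nonempty) :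
    IndepFun
      (fun ω => fun k : Fin n =>
        walk d X (sInf (TnSet d n A X ω) + (k : ℕ) + 1) ω
          - walk d X (sInf (TnSet d n A X ω)) ω)
      (fun ω => walk d X (sInf (TnSet d n A X ω)) ω) μ :=
  indepFun_of_measure_inter_preimage_eq_mul_of_factor _ _ fun _ _ hs ht ↦
    measure_inter_preimage_eq_mul_tsum hXmeas hindep hident hfin hs ht

/-- The process `(S_{T_n+k} − S_{T_n})_{k=1,…,n}` is independent of `S_{T_n}`. -/
theorem post_Tn_increments_indep {Ω : Type*} [MeasurableSpace Ω] (μ : Measure Ω)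
    [IsProbabilityMeasure μ] (d n : ℕ)
    (A : Submodule ℝ (EuclideanSpace ℝ (Fin d)))
    (X : ℕ → Ω → EuclideanSpace ℝ (Fin d))
    (hXmeas : ∀ k, Measurable (X k))
    (hXint : ∀ k ω i, ∃ m : ℤ, X k ω i = (m : ℝ))
    (hindep : iIndepFun X μ)
    (hident : ∀ k, IdentDistrib (X k) (X 0) μ μ)
    (hfin : ∀ᵐ ω ∂μ, (TnSet d n A X ω).Nonempty)
    (hpos : μ {ω | ∀ t : ℝ, 0 < t → t ≤ (n : ℝ) →
      walkInt d X t ω ∉ (A : Set (EuclideanSpace ℝ (Fin d)))} ≠ 0) :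
    IndepFun
      (fun ω => fun k : Fin n =>
        walk d X (sInf (TnSet d n A X ω) + (k : ℕ) + 1) ω
          - walk d X (sInf (TnSet d n A X ω)) ω)
      (fun ω => walk d X (sInf (TnSet d n A X ω)) ω) μ :=
  post_Tn_increments_indep_general μ d n A X hXmeas hindep hident hfin

end
end
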